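/- arXiv:1501.07348 — 3 statements merged into one kernel-verified Lean document; each statement's English description precedes it below -/
import Mathlib

section
/- Let G be a connected finite simple graph on n vertices and let k be an even integer with 4 ≤ k ≤ n and k < n^{4/5}. Then there exists a set S of exactly k vertices of G such that G[S] is connected and σ(G[S]) ≥ min{ k/(4n), n^{−2/5} } · σ*(G), where σ*(G) is the maximum density over all nonempty subgraphs of G. -/
open Finset

variable {V : Type*}

noncomputable def graphDensity [Fintype V] (G : SimpleGraph V) : ℝ :=
  2 * G.edgeSet.ncard / Fintype.card V

noncomputable def setDensity (G : SimpleGraph V) (A : Set V) : ℝ :=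
  2 * (G.induce A).edgeSet.ncard / A.ncard

noncomputable def indDensity (G : SimpleGraph V) (S : Finset V) : ℝ :=
  2 * (G.induce (S : Set V)).edgeSet.ncard / S.card

noncomputable def subDensity {G : SimpleGraph V} (H : G.Subgraph) : ℝ :=
  2 * H.edgeSet.ncard / H.verts.ncard

noncomputable def maxKDensity (G : SimpleGraph V) (k : ℕ) : ℝ :=
  sSup {x : ℝ | ∃ H : G.Subgraph, H.verts.ncard = k ∧ x = subDensity H}

noncomputable def maxConnKDensity (G : SimpleGraph V) (k : ℕ) : ℝ :=
  sSup {x : ℝ | ∃ H : G.Subgraph, H.verts.ncard = k ∧ H.Connected ∧ x = subDensity H}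

noncomputable def maxDensity (G : SimpleGraph V) : ℝ :=
  sSup {x : ℝ | ∃ H : G.Subgraph, H.verts.Nonempty ∧ x = subDensity H}

def cutCount (G : SimpleGraph V) [DecidableRel G.Adj] (S T : Finset V) : ℕ :=
  ((S ×ˢ T).filter fun p => G.Adj p.1 p.2).card

def IsCompOf (G : SimpleGraph V) (A W : Set V) : Prop :=
  A.Nonempty ∧ A ⊆ W ∧ (G.induce A).Connected ∧
    ∀ B : Set V, A ⊆ B → B ⊆ W → (G.induce B).Connected → B = A

noncomputable def subWDensity {G : SimpleGraph V} (w : Sym2 V → ℝ) (H : G.Subgraph) : ℝ :=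
  2 * (∑ᶠ e ∈ H.edgeSet, w e) / H.verts.ncard

noncomputable def indWDensity (G : SimpleGraph V) (w : Sym2 V → ℝ) (S : Finset V) : ℝ :=
  2 * (∑ᶠ e ∈ {e : Sym2 V | e ∈ G.edgeSet ∧ ∀ v ∈ e, v ∈ S}, w e) / S.card

noncomputable def maxKWDensity (G : SimpleGraph V) (w : Sym2 V → ℝ) (k : ℕ) : ℝ :=
  sSup {x : ℝ | ∃ H : G.Subgraph, H.verts.ncard = k ∧ x = subWDensity w H}

noncomputable def maxConnKWDensity (G : SimpleGraph V) (w : Sym2 V → ℝ) (k : ℕ) : ℝ :=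
  sSup {x : ℝ | ∃ H : G.Subgraph, H.verts.ncard = k ∧ H.Connected ∧ x = subWDensity w H}

/-! Let `d = σ*(G)` and let `U` be a smallest vertex set with `2 e(G[U]) ≥ d |U|`. Minimality
forces `G[U]` to be connected and to have minimum degree at least `d / 2`: deleting a vertex of
smaller degree, or splitting `U` along a disconnection, would give a smaller such set.

If `|U| ≤ k`, grow `U` inside the connected graph `G` to `k` vertices; each new vertex brings an
edge, and since `d ≤ |U| - 1` this yields density at least `n^{-2/5} d` as soon as
`k n^{-4/5} ≤ 1`.

If `|U| > k = 2h`, grow a connected `h`-set `T` inside `U` and attach the `h` vertices of `U \ T`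
with the most neighbours in `T`. Averaging over `U \ T` and the minimum degree bound give at least
`d h² / (2|U|)` edges, that is density at least `d k / (4n)`, and the set is then grown to `k`
vertices. -/

lemma Finset.exists_subset_card_eq_mul_sum_le {α : Type*} [DecidableEq α] (s : Finset α)
    (f : α → ℕ) {j : ℕ} (hj : j ≤ #s) :
    ∃ t ⊆ s, #t = j ∧ j * ∑ v ∈ s, f v ≤ #s * ∑ v ∈ t, f v := by
  obtain ⟨t, ht, hmax⟩ := exists_max_image (s.powersetCard j) (fun t ↦ ∑ v ∈ t, f v)
    (powersetCard_nonempty.2 hj)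
  obtain ⟨hts, htj⟩ := mem_powersetCard.1 ht
  have hswap : ∀ x ∈ s \ t, ∀ y ∈ t, f x ≤ f y := by
    intro x hx y hy
    obtain ⟨hxs, hxt⟩ := mem_sdiff.1 hx
    have hxe : x ∉ t.erase y := fun h ↦ hxt (mem_of_mem_erase h)
    have hmem : insert x (t.erase y) ∈ s.powersetCard j := by
      refine mem_powersetCard.2 ⟨insert_subset hxs ((erase_subset y t).trans hts), ?_⟩
      rw [card_insert_of_notMem hxe, card_erase_of_mem hy, htj]
      have := card_pos.2 ⟨y, hy⟩
      omega
    have := hmax _ hmem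
    rw [sum_insert hxe, ← add_sum_erase t f hy] at this
    omega
  have hout : j * ∑ x ∈ s \ t, f x ≤ (#s - j) * ∑ y ∈ t, f y :=
    calc j * ∑ x ∈ s \ t, f x = ∑ x ∈ s \ t, ∑ _y ∈ t, f x := by
          rw [mul_sum]; simp [htj]
      _ ≤ ∑ _x ∈ s \ t, ∑ y ∈ t, f y :=
          sum_le_sum fun x hx ↦ sum_le_sum fun y hy ↦ hswap x hx y hy
      _ = (#s - j) * ∑ y ∈ t, f y := by simp [card_sdiff_of_subset hts, htj]
  refine ⟨t, hts, htj, ?_⟩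
  calc j * ∑ v ∈ s, f v = j * ∑ x ∈ s \ t, f x + j * ∑ y ∈ t, f y := by
        rw [← sum_sdiff hts, mul_add]
    _ ≤ (#s - j) * ∑ y ∈ t, f y + j * ∑ y ∈ t, f y := by gcongr
    _ = #s * ∑ y ∈ t, f y := by rw [← add_mul, Nat.sub_add_cancel hj]

lemma mul_rpow_neg_two_fifths_sq_le_one {a x : ℝ} (hx : 0 < x) (ha : a ≤ x ^ ((4 : ℝ) / 5)) :
    a * (x ^ (-(2 : ℝ) / 5)) ^ 2 ≤ 1 := by
  have hsq : (x ^ (-(2 : ℝ) / 5)) ^ 2 = (x ^ ((4 : ℝ) / 5))⁻¹ := by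
    rw [← Real.rpow_natCast, ← Real.rpow_mul hx.le, ← Real.rpow_neg hx.le]
    norm_num
  rw [hsq, ← div_eq_mul_inv]
  exact div_le_one_of_le₀ ha (by positivity)

lemma mul_mul_le_of_sq_mul_le_one {d m k r : ℝ} (hd : 0 ≤ d) (hdm : d ≤ m - 1) (hmk : m ≤ k)
    (hk : 4 ≤ k) (hr : 0 ≤ r) (hrk : k * r ^ 2 ≤ 1) : r * d * k ≤ d * m + 2 * (k - m) := by
  have hr2 : r ≤ 1 / 2 := by nlinarith
  rcases le_or_gt (r * k) m with h | h
  · nlinarith [mul_le_mul_of_nonneg_left h hd]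
  -- Here `m < r k ≤ k / 2`, so `d (r k - m) ≤ (r k)² ≤ k ≤ 2 (k - m)`.
  · have : d * (r * k - m) ≤ (r * k) ^ 2 :=
      calc d * (r * k - m) ≤ (m - 1) * (r * k - m) := by gcongr
        _ ≤ (r * k) * (r * k) :=
          mul_le_mul (by linarith) (by linarith) (by linarith) (by positivity)
        _ = (r * k) ^ 2 := by ring
    nlinarith

namespace SimpleGraph

section

variable (G : SimpleGraph V) [DecidableRel G.Adj]

def degWithin (S : Finset V) (v : V) : ℕ := #{u ∈ S | G.Adj v u}

def degSum (S : Finset V) : ℕ := ∑ v ∈ S, G.degWithin S v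

variable {G} {S T A B : Finset V} {v : V}

lemma degWithin_mono (h : S ⊆ T) (v : V) : G.degWithin S v ≤ G.degWithin T v :=
  card_le_card (filter_subset_filter _ h)

lemma degWithin_pos_iff : 0 < G.degWithin S v ↔ ∃ u ∈ S, G.Adj v u := by
  simp [degWithin, card_pos, Finset.Nonempty]

lemma sum_degWithin_comm : ∑ v ∈ A, G.degWithin B v = ∑ v ∈ B, G.degWithin A v := by
  simp only [degWithin, card_filter]
  rw [sum_comm]
  simp [G.adj_comm]

lemma degSum_le : G.degSum S ≤ #S * (#S - 1) := by
  classical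
  calc G.degSum S ≤ ∑ v ∈ S, #(S.erase v) :=
        sum_le_sum fun v _ ↦ card_le_card fun u hu ↦ by
          simp only [mem_filter] at hu
          exact mem_erase.2 ⟨(G.ne_of_adj hu.2).symm, hu.1⟩
    _ = #S * (#S - 1) := by
        rw [sum_congr rfl fun v hv ↦ card_erase_of_mem hv, sum_const, smul_eq_mul]

lemma degSum_mono (h : S ⊆ T) : G.degSum S ≤ G.degSum T :=
  calc G.degSum S ≤ ∑ v ∈ S, G.degWithin T v := sum_le_sum fun v _ ↦ degWithin_mono h v
    _ ≤ G.degSum T := sum_le_sum_of_subset h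

variable [DecidableEq V]

lemma degWithin_union (h : Disjoint A B) :
    G.degWithin (A ∪ B) v = G.degWithin A v + G.degWithin B v := by
  rw [degWithin, filter_union, card_union_of_disjoint (disjoint_filter_filter h)]
  rfl

lemma degSum_insert (hv : v ∉ S) :
    G.degSum (insert v S) = G.degSum S + 2 * G.degWithin S v := by
  have hself : G.degWithin (insert v S) v = G.degWithin S v := by
    rw [degWithin, filter_insert, if_neg (G.irrefl)]
    rfl
  have hother : ∀ u ∈ S,
      G.degWithin (insert v S) u = G.degWithin S u + if G.Adj u v then 1 else 0 := by
    intro u _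
    rw [degWithin, filter_insert]
    split_ifs with h
    · exact card_insert_of_notMem fun hmem ↦ hv (mem_filter.1 hmem).1
    · rfl
  have hcount : (∑ u ∈ S, if G.Adj u v then 1 else 0) = G.degWithin S v := by
    rw [← card_filter, degWithin]
    simp only [G.adj_comm]
  rw [degSum, sum_insert hv, hself, sum_congr rfl hother, sum_add_distrib, hcount, degSum]
  ring

lemma degSum_union_of_forall_not_adj (hd : Disjoint A B) (h : ∀ a ∈ A, ∀ b ∈ B, ¬G.Adj a b) :
    G.degSum (A ∪ B) = G.degSum A + G.degSum B := by
  have hzero : ∀ {X Y : Finset V}, (∀ x ∈ X, ∀ y ∈ Y, ¬G.Adj x y) →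
      ∀ x ∈ X, G.degWithin Y x = 0 := fun hXY x hx ↦
    Nat.eq_zero_of_not_pos fun hpos ↦ by
      obtain ⟨y, hy, hxy⟩ := degWithin_pos_iff.1 hpos
      exact hXY x hx y hy hxy
  have hBA : ∀ b ∈ B, ∀ a ∈ A, ¬G.Adj b a := fun b hb a ha hba ↦ h a ha b hb hba.symm
  rw [degSum, sum_union hd]
  congr 1 <;> refine sum_congr rfl fun x hx ↦ ?_ <;> rw [degWithin_union hd]
  · rw [hzero h x hx, add_zero]
  · rw [hzero hBA x hx, zero_add]

lemma sum_degWithin_eq_degSum_add (h : T ⊆ A) :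
    ∑ t ∈ T, G.degWithin A t = G.degSum T + ∑ v ∈ A \ T, G.degWithin T v := by
  have hsplit : ∀ t ∈ T, G.degWithin A t = G.degWithin T t + G.degWithin (A \ T) t := by
    intro t _
    rw [← degWithin_union disjoint_sdiff, union_sdiff_of_subset h]
  rw [sum_congr rfl hsplit, sum_add_distrib, sum_degWithin_comm (B := A \ T), degSum]

end

section

variable {G : SimpleGraph V} [DecidableRel G.Adj]

lemma degSum_eq_card_adj_pairs (S : Finset V) :
    G.degSum S = #{p ∈ S ×ˢ S | G.Adj p.1 p.2} := by
  rw [card_filter, sum_product]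
  exact sum_congr rfl fun v _ ↦ card_filter _ _

lemma two_mul_ncard_edgeSet_induce (S : Finset V) :
    2 * (G.induce (S : Set V)).edgeSet.ncard = G.degSum S := by
  classical
  rw [← coe_edgeFinset, Set.ncard_coe_finset, two_mul_card_edgeFinset, degSum_eq_card_adj_pairs]
  refine card_bij (fun p _ ↦ ((p.1 : V), (p.2 : V))) ?_ ?_ ?_
  · rintro ⟨a, b⟩ hab
    simpa using hab
  · rintro ⟨a, b⟩ _ ⟨a', b'⟩ _ h
    simp only [Prod.mk.injEq] at h
    ext <;> simp [h.1, h.2]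
  · rintro ⟨a, b⟩ hab
    simp only [mem_filter, mem_product] at hab
    exact ⟨(⟨a, hab.1.1⟩, ⟨b, hab.1.2⟩), by simpa using hab.2, rfl⟩

lemma indDensity_eq_degSum_div (S : Finset V) : indDensity G S = G.degSum S / #S := by
  rw [indDensity, ← two_mul_ncard_edgeSet_induce]
  push_cast
  rfl

lemma Subgraph.two_mul_ncard_edgeSet_le_degSum (H : G.Subgraph) {W : Finset V}
    (hW : (W : Set V) = H.verts) : 2 * H.edgeSet.ncard ≤ G.degSum W := by
  have hcoe : H.edgeSet.ncard = H.coe.edgeSet.ncard := by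
    rw [← H.image_coe_edgeSet_coe]
    exact Set.ncard_image_of_injective _ (Sym2.map.injective Subtype.val_injective)
  have hle : H.coe ≤ G.induce H.verts := fun a b hab ↦ H.coe_adj_sub a b hab
  have : Finite H.verts := hW ▸ W.finite_toSet.to_subtype
  rw [hcoe, ← two_mul_ncard_edgeSet_induce, hW]
  exact Nat.mul_le_mul_left 2 (Set.ncard_le_ncard (SimpleGraph.edgeSet_mono hle))

omit [DecidableRel G.Adj] in
lemma maxDensity_nonneg : 0 ≤ maxDensity G :=
  Real.sSup_nonneg fun _ ⟨_, _, hx⟩ ↦ hx ▸ by unfold subDensity; positivity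

lemma maxDensity_le_of_forall [Finite V] {M : ℝ} (hM : 0 ≤ M)
    (h : ∀ W : Finset V, W.Nonempty → G.degSum W / #W ≤ M) : maxDensity G ≤ M := by
  refine Real.sSup_le ?_ hM
  rintro x ⟨H, hne, rfl⟩
  obtain ⟨W, hW⟩ := (Set.toFinite H.verts).exists_finset_coe
  calc subDensity H = ((2 * H.edgeSet.ncard : ℕ) : ℝ) / #W := by
        rw [subDensity, ← hW, Set.ncard_coe_finset]
        push_cast
        rfl
    _ ≤ G.degSum W / #W := by
        gcongr
        exact_mod_cast H.two_mul_ncard_edgeSet_le_degSum hW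
    _ ≤ M := h W (by rwa [← coe_nonempty, hW])

lemma exists_maxDensity_mul_card_le_degSum [Fintype V] [Nonempty V] :
    ∃ U : Finset V, U.Nonempty ∧ maxDensity G * #U ≤ G.degSum U := by
  obtain ⟨U, hU, hmax⟩ := exists_max_image {W : Finset V | W.Nonempty}
    (fun W ↦ (G.degSum W : ℝ) / #W) ⟨{Classical.arbitrary V}, by simp⟩
  rw [mem_filter] at hU
  refine ⟨U, hU.2, (le_div_iff₀ (by exact_mod_cast hU.2.card_pos)).1 ?_⟩
  exact maxDensity_le_of_forall (by positivity) fun W hW ↦ hmax W (by simp [hW])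

end

section

variable {G : SimpleGraph V} {T P W : Finset V} {u v : V}

lemma connected_induce_singleton (v : V) : (G.induce ({v} : Set V)).Connected := by
  rw [induce_singleton_eq_top]
  exact connected_top

lemma Connected.exists_adj_notMem (hW : (G.induce (W : Set V)).Connected) (hTW : T ⊆ W)
    (hT : T.Nonempty) (hne : ¬W ⊆ T) : ∃ u ∈ T, ∃ v ∈ W, v ∉ T ∧ G.Adj u v := by
  obtain ⟨u, hu⟩ := hT
  obtain ⟨w, hwW, hwT⟩ := not_subset.1 hne
  obtain ⟨p⟩ := hW.preconnected ⟨u, hTW hu⟩ ⟨w, hwW⟩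
  obtain ⟨d, -, hd₁, hd₂⟩ := p.exists_boundary_dart {x | (x : V) ∈ T} hu hwT
  exact ⟨d.fst, hd₁, d.snd, d.snd.2, hd₂, d.adj⟩

lemma Connected.induce_univ [Fintype V] (hG : G.Connected) :
    (G.induce ((univ : Finset V) : Set V)).Connected := by
  rw [coe_univ]
  exact (induceUnivIso G).connected_iff.2 hG

variable [DecidableEq V]

lemma Connected.induce_insert (hT : (G.induce (T : Set V)).Connected)
    (hu : u ∈ T) (ha : G.Adj u v) : (G.induce ((insert v T : Finset V) : Set V)).Connected := by
  rw [coe_insert, Set.insert_eq, Set.union_comm]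
  exact connected_induce_union hT.preconnected (connected_induce_singleton v).preconnected
    hu rfl ha

lemma Connected.induce_union_of_forall_adj (hT : (G.induce (T : Set V)).Connected)
    (hP : ∀ v ∈ P, ∃ u ∈ T, G.Adj u v) : (G.induce ((T ∪ P : Finset V) : Set V)).Connected := by
  induction P using Finset.induction_on with
  | empty => rwa [union_empty]
  | insert a P haP ih =>
    obtain ⟨u, hu, hua⟩ := hP a (mem_insert_self a P)
    rw [union_insert]
    exact (ih fun v hv ↦ hP v (mem_insert_of_mem hv)).induce_insert (mem_union_left P hu) hua

variable [DecidableRel G.Adj]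

lemma Connected.exists_superset_card_eq (hW : (G.induce (W : Set V)).Connected)
    (hT : (G.induce (T : Set V)).Connected) (hTW : T ⊆ W) {k : ℕ} (hTk : #T ≤ k)
    (hkW : k ≤ #W) : ∃ S, T ⊆ S ∧ S ⊆ W ∧ #S = k ∧ (G.induce (S : Set V)).Connected ∧
      G.degSum T + 2 * (k - #T) ≤ G.degSum S := by
  obtain ⟨n, rfl⟩ := Nat.exists_eq_add_of_le hTk
  clear hTk
  induction n generalizing T with
  | zero => exact ⟨T, subset_rfl, hTW, rfl, hT, by simp⟩
  | succ n ih =>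
    have hTne : T.Nonempty := let ⟨⟨x, hx⟩⟩ := hT.nonempty; ⟨x, hx⟩
    obtain ⟨u, huT, v, hvW, hvT, huv⟩ := hW.exists_adj_notMem hTW hTne fun h ↦ by
      have := card_le_card h
      omega
    have hcard : #(insert v T) = #T + 1 := card_insert_of_notMem hvT
    obtain ⟨S, hS, hSW, hSk, hSc, hSdeg⟩ := ih (hT.induce_insert huT huv)
      (insert_subset hvW hTW) (by omega)
    have hdeg : 0 < G.degWithin T v := degWithin_pos_iff.2 ⟨u, huT, huv.symm⟩
    refine ⟨S, (subset_insert v T).trans hS, hSW, by omega, hSc, ?_⟩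
    rw [degSum_insert hvT] at hSdeg
    omega

lemma degSum_add_le_degSum_union (hTP : Disjoint T P) :
    G.degSum T + 2 * ∑ v ∈ P, G.degWithin T v ≤ G.degSum (T ∪ P) := by
  induction P using Finset.induction_on with
  | empty => simp
  | insert a P haP ih =>
    rw [disjoint_insert_right] at hTP
    have haTP : a ∉ T ∪ P := by simp [hTP.1, haP]
    have hdeg := degWithin_mono (G := G) subset_union_left a (T := T ∪ P)
    rw [union_insert, degSum_insert haTP, sum_insert haP]
    have := ih hTP.2
    omega

end

section

variable {G : SimpleGraph V} [DecidableRel G.Adj] [DecidableEq V] {T U : Finset V} {d : ℝ}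

lemma degSum_erase {v : V} (hv : v ∈ U) :
    G.degSum U = G.degSum (U.erase v) + 2 * G.degWithin U v := by
  have hself : G.degWithin (U.erase v) v = G.degWithin U v := by
    rw [degWithin, filter_erase, erase_eq_of_notMem (by simp)]
    rfl
  rw [← hself, ← degSum_insert (notMem_erase v U), insert_erase hv]

lemma exists_split_of_not_connected (hU : U.Nonempty) (h : ¬(G.induce (U : Set V)).Connected) :
    ∃ A B : Finset V, Disjoint A B ∧ A ∪ B = U ∧ A.Nonempty ∧ B.Nonempty ∧
      ∀ a ∈ A, ∀ b ∈ B, ¬G.Adj a b := by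
  classical
  obtain ⟨v₀, hv₀⟩ := hU
  set A := {u ∈ U | ∃ hu : u ∈ U, (G.induce (U : Set V)).Reachable ⟨v₀, hv₀⟩ ⟨u, hu⟩}
  have hAU : A ⊆ U := filter_subset _ _
  refine ⟨A, U \ A, disjoint_sdiff, union_sdiff_of_subset hAU,
    ⟨v₀, mem_filter.2 ⟨hv₀, hv₀, .rfl⟩⟩, ?_, ?_⟩
  · refine sdiff_nonempty.2 fun hUA ↦ h ?_
    refine (connected_iff_exists_forall_reachable _).2 ⟨⟨v₀, hv₀⟩, fun ⟨u, hu⟩ ↦ ?_⟩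
    obtain ⟨-, _, hr⟩ := mem_filter.1 (hUA hu)
    exact hr
  · intro a ha b hb hab
    obtain ⟨hbU, hbA⟩ := mem_sdiff.1 hb
    obtain ⟨-, _, hr⟩ := mem_filter.1 ha
    exact hbA (mem_filter.2 ⟨hbU, hbU, hr.trans (Adj.reachable (by simpa using hab))⟩)

section Minimal

variable (hUd : d * #U ≤ G.degSum U) (hmin : ∀ W ⊂ U, W.Nonempty → G.degSum W < d * #W)
include hUd hmin

lemma le_two_mul_degWithin_of_minimal {v : V} (hv : v ∈ U) : d ≤ 2 * G.degWithin U v := by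
  by_contra! hlt
  have hd : 0 < d := lt_of_le_of_lt (by positivity) hlt
  have hne : (U.erase v).Nonempty := by
    rw [← card_pos, card_erase_of_mem hv]
    by_contra! h1
    have hU0 : (G.degSum U : ℝ) ≤ 0 := by
      exact_mod_cast G.degSum_le.trans (by rw [Nat.le_zero.1 h1, mul_zero])
    have : (0 : ℝ) < d * #U := mul_pos hd (by exact_mod_cast card_pos.2 ⟨v, hv⟩)
    linarith
  have hlt' := hmin _ (erase_ssubset hv) hne
  rw [degSum_erase hv] at hUd
  rw [card_erase_of_mem hv, Nat.cast_sub (card_pos.2 ⟨v, hv⟩)] at hlt'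
  push_cast at hUd hlt'
  linarith

lemma connected_of_minimal (hU : U.Nonempty) : (G.induce (U : Set V)).Connected := by
  by_contra hc
  obtain ⟨A, B, hAB, rfl, hA, hB, hnadj⟩ := exists_split_of_not_connected hU hc
  obtain ⟨a, ha⟩ := hA
  obtain ⟨b, hb⟩ := hB
  have hAlt := hmin A ((ssubset_iff_of_subset subset_union_left).2
    ⟨b, mem_union_right _ hb, Finset.disjoint_right.1 hAB hb⟩) ⟨a, ha⟩
  have hBlt := hmin B ((ssubset_iff_of_subset subset_union_right).2
    ⟨a, mem_union_left _ ha, Finset.disjoint_left.1 hAB ha⟩) ⟨b, hb⟩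
  rw [degSum_union_of_forall_not_adj hAB hnadj, card_union_of_disjoint hAB] at hUd
  push_cast at hUd
  linarith

end Minimal

lemma exists_dense_core {U₀ : Finset V} (hU₀ : U₀.Nonempty) (hd : d * #U₀ ≤ G.degSum U₀) :
    ∃ U : Finset V, d * #U ≤ G.degSum U ∧ (∀ v ∈ U, d ≤ 2 * G.degWithin U v) ∧
      (G.induce (U : Set V)).Connected := by
  classical
  obtain ⟨U, hU, hUmin⟩ := exists_min_image {W ∈ U₀.powerset | W.Nonempty ∧ d * #W ≤ G.degSum W}
    card ⟨U₀, by simp [hU₀, hd]⟩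
  simp only [mem_filter, mem_powerset] at hU hUmin
  obtain ⟨hUU₀, hUne, hUd⟩ := hU
  have hmin : ∀ W ⊂ U, W.Nonempty → G.degSum W < d * #W := fun W hWU hW ↦ by
    by_contra! hWd
    exact (card_lt_card hWU).not_ge (hUmin W ⟨hWU.subset.trans hUU₀, hW, hWd⟩)
  exact ⟨U, hUd, fun v hv ↦ le_two_mul_degWithin_of_minimal hUd hmin hv,
    connected_of_minimal hUd hmin hUne⟩

/-- Attach to `T` the `#T` vertices of `U \ T` with the most neighbours in `T`: by averaging they
carry a `#T / #(U \ T)` share of the edges between `T` and `U \ T`. -/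
lemma Connected.exists_attach_neighbors (hT : (G.induce (T : Set V)).Connected) (hTU : T ⊆ U)
    (hU : 2 * #T ≤ #U) : ∃ S ⊆ U, (G.induce (S : Set V)).Connected ∧ #S ≤ 2 * #T ∧
      2 * #T * ∑ t ∈ T, G.degWithin U t ≤ #U * G.degSum S := by
  set X := ∑ v ∈ U \ T, G.degWithin T v
  obtain ⟨P, hP, hPcard, hPX⟩ := (U \ T).exists_subset_card_eq_mul_sum_le (G.degWithin T)
    (j := #T) (by rw [card_sdiff_of_subset hTU]; omega)
  set P' := {v ∈ P | 0 < G.degWithin T v}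
  have hP' : ∑ v ∈ P', G.degWithin T v = ∑ v ∈ P, G.degWithin T v :=
    sum_filter_of_ne fun _ _ h ↦ Nat.pos_of_ne_zero h
  have hP'U : P' ⊆ U \ T := (filter_subset _ _).trans hP
  have hdisj : Disjoint T P' := disjoint_of_subset_right hP'U disjoint_sdiff
  refine ⟨T ∪ P', union_subset hTU (hP'U.trans sdiff_subset), ?_, ?_, ?_⟩
  · refine hT.induce_union_of_forall_adj fun v hv ↦ ?_
    obtain ⟨u, hu, hvu⟩ := degWithin_pos_iff.1 (mem_filter.1 hv).2
    exact ⟨u, hu, hvu.symm⟩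
  · have : #P' ≤ #P := card_filter_le _ _
    have := card_union_le T P'
    omega
  · set Y := ∑ v ∈ P, G.degWithin T v
    have hS : G.degSum T + 2 * Y ≤ G.degSum (T ∪ P') := hP' ▸ degSum_add_le_degSum_union hdisj
    have hY : #(U \ T) * Y ≤ #U * Y := Nat.mul_le_mul_right Y (card_le_card sdiff_subset)
    calc 2 * #T * ∑ t ∈ T, G.degWithin U t = 2 * #T * G.degSum T + 2 * (#T * X) := by
          rw [sum_degWithin_eq_degSum_add hTU]; ring
      _ ≤ #U * G.degSum T + 2 * (#U * Y) :=
          add_le_add (Nat.mul_le_mul_right _ hU) (Nat.mul_le_mul_left 2 (hPX.trans hY))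
      _ = #U * (G.degSum T + 2 * Y) := by ring
      _ ≤ #U * G.degSum (T ∪ P') := Nat.mul_le_mul_left _ hS

variable [Fintype V] {k : ℕ}

lemma exists_connected_card_eq_of_card_le (hG : G.Connected)
    (hU : (G.induce (U : Set V)).Connected) (hd : 0 ≤ d) (hUd : d * #U ≤ G.degSum U)
    (hUk : #U ≤ k) (hkV : k ≤ Fintype.card V) (hk : 4 ≤ k) {r : ℝ} (hr : 0 ≤ r) (hrk : k * r ^ 2 ≤ 1) :
    ∃ S : Finset V, #S = k ∧ (G.induce (S : Set V)).Connected ∧ r * d * k ≤ G.degSum S := by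
  obtain ⟨S, -, -, hS, hSc, hSU⟩ := hG.induce_univ.exists_superset_card_eq hU (subset_univ U)
    hUk (by rwa [card_univ])
  refine ⟨S, hS, hSc, ?_⟩
  have hU0 : 0 < #U := by
    obtain ⟨⟨v, hv⟩⟩ := hU.nonempty
    exact card_pos.2 ⟨v, hv⟩
  have hdU : d ≤ #U - 1 := by
    have := (Nat.cast_le (α := ℝ)).2 (G.degSum_le (S := U))
    rw [Nat.cast_mul, Nat.cast_sub hU0, Nat.cast_one] at this
    exact le_of_mul_le_mul_right (by linarith) (by exact_mod_cast hU0 : (0 : ℝ) < #U)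
  have := (Nat.cast_le (α := ℝ)).2 hSU
  push_cast [Nat.cast_sub hUk] at this
  calc r * d * k ≤ d * #U + 2 * (k - #U) :=
        mul_mul_le_of_sq_mul_le_one hd hdU (by exact_mod_cast hUk) (by exact_mod_cast hk) hr hrk
    _ ≤ G.degSum S := by linarith

lemma exists_connected_card_eq_of_minDegree (hG : G.Connected)
    (hU : (G.induce (U : Set V)).Connected) (hdeg : ∀ v ∈ U, d ≤ 2 * G.degWithin U v) {h : ℕ}
    (hh : 0 < h) (hhU : 2 * h ≤ #U) :
    ∃ S : Finset V, #S = 2 * h ∧ (G.induce (S : Set V)).Connected ∧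
      d * h ^ 2 ≤ #U * G.degSum S := by
  obtain ⟨⟨v₀, hv₀⟩⟩ := hU.nonempty
  obtain ⟨T, -, hTU, hT, hTc, -⟩ := hU.exists_superset_card_eq (T := {v₀})
    (by rw [coe_singleton]; exact connected_induce_singleton v₀) (singleton_subset_iff.2 hv₀)
    (k := h) (by rw [card_singleton]; omega) (by omega)
  obtain ⟨S₀, -, hS₀c, hS₀, hS₀d⟩ := hTc.exists_attach_neighbors hTU (by omega)
  obtain ⟨S, hS₀S, -, hS, hSc, -⟩ := hG.induce_univ.exists_superset_card_eq hS₀c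
    (subset_univ _) (k := 2 * h) (by omega)
    ((hhU.trans (card_le_card (subset_univ U))).trans_eq card_univ)
  refine ⟨S, hS, hSc, ?_⟩
  have hdT : d * h ≤ 2 * ∑ t ∈ T, (G.degWithin U t : ℝ) := by
    rw [mul_sum, ← hT, mul_comm, ← nsmul_eq_mul, ← sum_const]
    exact sum_le_sum fun t ht ↦ hdeg t (hTU ht)
  have hS₀d' : 2 * h * ∑ t ∈ T, (G.degWithin U t : ℝ) ≤ #U * G.degSum S₀ := by
    exact_mod_cast hT ▸ hS₀d
  calc d * h ^ 2 = h * (d * h) := by ring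
    _ ≤ h * (2 * ∑ t ∈ T, (G.degWithin U t : ℝ)) := by gcongr
    _ ≤ #U * G.degSum S₀ := by linarith
    _ ≤ #U * G.degSum S := by gcongr; exact degSum_mono hS₀S

end

end SimpleGraph

open SimpleGraph

/-- for `k < n^{4/5}` there is a connected `k`-subgraph of density at
least `min{k/(4n), n^{-2/5}}·σ*(G)`. -/
theorem stmt9 [Fintype V] (G : SimpleGraph V) (hG : G.Connected) (k : ℕ)
    (hke : Even k) (hk4 : 4 ≤ k) (hkn : k ≤ Fintype.card V)
    (hk45 : (k : ℝ) < (Fintype.card V : ℝ) ^ ((4 : ℝ) / 5)) :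
    ∃ S : Finset V, S.card = k ∧ (G.induce (S : Set V)).Connected ∧
      indDensity G S ≥
        min ((k : ℝ) / (4 * (Fintype.card V : ℝ))) ((Fintype.card V : ℝ) ^ (-(2 : ℝ) / 5)) *
          maxDensity G := by
  classical
  set n := Fintype.card V
  have hn : (0 : ℝ) < n := by exact_mod_cast (by omega : 0 < n)
  have : Nonempty V := Fintype.card_pos_iff.1 (by omega)
  suffices ∃ S : Finset V, #S = k ∧ (G.induce (S : Set V)).Connected ∧
      min ((k : ℝ) / (4 * n)) (n ^ (-(2 : ℝ) / 5)) * maxDensity G * k ≤ G.degSum S by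
    obtain ⟨S, hS, hSc, hSd⟩ := this
    refine ⟨S, hS, hSc, ?_⟩
    rwa [ge_iff_le, indDensity_eq_degSum_div, hS, le_div_iff₀ (by positivity)]
  have hd : 0 ≤ maxDensity G := maxDensity_nonneg
  obtain ⟨U₀, hU₀, hU₀d⟩ := exists_maxDensity_mul_card_le_degSum (G := G)
  obtain ⟨U, hUd, hUdeg, hU⟩ := exists_dense_core hU₀ hU₀d
  rcases le_or_gt #U k with hUk | hkU
  · obtain ⟨S, hS, hSc, hSd⟩ := exists_connected_card_eq_of_card_le hG hU hd hUd hUk hkn hk4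
      (by positivity) (mul_rpow_neg_two_fifths_sq_le_one hn hk45.le)
    exact ⟨S, hS, hSc, le_trans (by gcongr; apply min_le_right) hSd⟩
  · obtain ⟨h, rfl⟩ := hke
    obtain ⟨S, hS, hSc, hSd⟩ :=
      exists_connected_card_eq_of_minDegree hG hU hUdeg (h := h) (by omega) (by omega)
    have hUn : (#U : ℝ) * G.degSum S ≤ n * G.degSum S := by
      gcongr
      exact_mod_cast card_le_univ U
    refine ⟨S, by omega, hSc, ?_⟩
    calc _ ≤ ((h + h : ℕ) : ℝ) / (4 * n) * maxDensity G * (h + h : ℕ) := by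
          gcongr; apply min_le_left
      _ = maxDensity G * h ^ 2 / n := by push_cast; field_simp; ring
      _ ≤ G.degSum S := by rw [div_le_iff₀ hn]; linarith
end

section
/- Let G be a connected finite simple graph on n vertices, let k be an even integer with 4 ≤ k ≤ 2n/3, let V_h be a set of k/2 vertices of G of highest degrees, and let d_h = (2/k)·∑_{v ∈ V_h} d_G(v). Suppose the induced subgraph G[V(G)∖V_h] contains a subgraph on exactly k vertices with average degree at least d, where d ≥ 0. Then there exists a set S of exactly k vertices of G such that G[S] is connected and σ(G[S]) ≥ d²·(k−2) / (2k·max{k, 2d_h}). -/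
open Finset

variable {V : Type*}

/-! A vertex set whose induced graph is disconnected splits into two parts with no edges
between them, and by the mediant inequality one of the parts is at least as dense as the whole;
iterating, the `k` vertices of the given subgraph contain a connected set `C` of density at
least `d`. Such a set has more than `d` vertices, hence at least `d²/2` edges. Growing `C` one
neighbour at a time inside the connected graph `G` gives a connected set of exactly `k` vertices
with at least as many edges, so its density is at least `d²/k`, which dominates the stated
bound because `k ≤ max{k, 2 d_h}`. -/

lemma add_div_add_le_div_or_le_div {K : Type*} [Field K] [LinearOrder K]
    [IsStrictOrderedRing K] {a₁ a₂ b₁ b₂ : K} (hb₁ : 0 < b₁) (hb₂ : 0 < b₂) :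
    (a₁ + a₂) / (b₁ + b₂) ≤ a₁ / b₁ ∨ (a₁ + a₂) / (b₁ + b₂) ≤ a₂ / b₂ := by
  by_contra! h
  rw [div_lt_div_iff₀ hb₁ (by positivity), div_lt_div_iff₀ hb₂ (by positivity)] at h
  nlinarith [h.1, h.2]

namespace SimpleGraph

variable (G : SimpleGraph V)

lemma exists_partition_of_not_connected_induce [DecidableEq V] {S : Finset V}
    (hS : S.Nonempty) (h : ¬ (G.induce (S : Set V)).Connected) :
    ∃ A B : Finset V, Disjoint A B ∧ A ∪ B = S ∧ A.Nonempty ∧ B.Nonempty ∧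
      ∀ a ∈ A, ∀ b ∈ B, ¬ G.Adj a b := by
  classical
  have : Nonempty (S : Set V) := hS.to_set.to_subtype
  obtain ⟨x, y, hxy⟩ : ∃ x y, ¬ (G.induce (S : Set V)).Reachable x y := by
    simpa [connected_iff, Preconnected, this] using h
  let P : V → Prop := fun u =>
    ∃ hu : u ∈ (S : Set V), (G.induce (S : Set V)).Reachable x ⟨u, hu⟩
  refine ⟨S.filter P, S.filter (¬ P ·), disjoint_filter_filter_not _ _ _,
    filter_union_filter_not_eq _ _, ⟨x, mem_filter.2 ⟨x.2, x.2, .rfl⟩⟩,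
    ⟨y, mem_filter.2 ⟨y.2, fun ⟨_, hy⟩ => hxy hy⟩⟩, ?_⟩
  rintro a ha b hb hab
  obtain ⟨-, haS, hxa⟩ := mem_filter.1 ha
  obtain ⟨hbS, hxb⟩ := mem_filter.1 hb
  exact hxb ⟨hbS, hxa.trans (Adj.reachable (G := G.induce (S : Set V)) (v := ⟨b, hbS⟩) hab)⟩

lemma exists_connected_induce_insert [DecidableEq V] (hG : G.Preconnected) {S : Finset V}
    (hS : S.Nonempty) (hconn : (G.induce (S : Set V)).Connected) {w : V} (hw : w ∉ S) :
    ∃ v ∉ S, (G.induce (insert v S : Finset V)).Connected := by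
  obtain ⟨u, hu⟩ := hS
  obtain ⟨dart, -, hfst, hsnd⟩ :=
    (hG u w).some.exists_boundary_dart (S : Set V) (mem_coe.2 hu) (by simpa using hw)
  refine ⟨dart.snd, by simpa using hsnd, ?_⟩
  have hunion := induce_union_connected hconn.preconnected
    (induce_pair_connected_of_adj dart.adj).preconnected ⟨dart.fst, hfst, by simp⟩
  rwa [Set.union_insert, Set.union_singleton,
    Set.insert_eq_of_mem (Set.mem_insert_of_mem _ hfst), ← coe_insert] at hunion

lemma exists_connected_superset_card [Fintype V] [DecidableEq V] (hG : G.Preconnected)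
    {C : Finset V} (hC : C.Nonempty) (hconn : (G.induce (C : Set V)).Connected) {m : ℕ}
    (hCm : #C ≤ m) (hm : m ≤ Fintype.card V) :
    ∃ S, C ⊆ S ∧ #S = m ∧ (G.induce (S : Set V)).Connected := by
  induction m, hCm using Nat.le_induction with
  | base => exact ⟨C, subset_rfl, rfl, hconn⟩
  | succ m hCm ih =>
    obtain ⟨S, hCS, hSm, hSconn⟩ := ih (by omega)
    obtain ⟨w, hw⟩ : ∃ w, w ∉ S := by
      by_contra! hall
      have := card_le_card (fun v _ => hall v : univ ⊆ S)
      rw [card_univ] at this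
      omega
    obtain ⟨v, hv, hvconn⟩ := G.exists_connected_induce_insert hG (hC.mono hCS) hSconn hw
    exact ⟨insert v S, hCS.trans (subset_insert v S), by rw [card_insert_of_notMem hv, hSm],
      hvconn⟩

lemma ncard_edgeSet_induce [Fintype V] [DecidableEq V] [DecidableRel G.Adj] (S : Finset V) :
    (G.induce (S : Set V)).edgeSet.ncard = #(G.edgeFinset ∩ S.sym2) := by
  rw [← filter_edgeFinset_toFinset_subset, card_filter_edgeFinset_toFinset_subset,
    ← Set.ncard_coe_finset, coe_edgeFinset]

lemma ncard_edgeSet_induce_mono [Fintype V] [DecidableEq V] [DecidableRel G.Adj]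
    {S T : Finset V} (h : S ⊆ T) :
    (G.induce (S : Set V)).edgeSet.ncard ≤ (G.induce (T : Set V)).edgeSet.ncard := by
  simp only [ncard_edgeSet_induce]
  exact card_le_card (inter_subset_inter_left (sym2_mono h))

lemma ncard_edgeSet_induce_union [Fintype V] [DecidableEq V] [DecidableRel G.Adj]
    {A B : Finset V} (hAB : Disjoint A B) (hcross : ∀ a ∈ A, ∀ b ∈ B, ¬ G.Adj a b) :
    (G.induce (A ∪ B : Finset V)).edgeSet.ncard =
      (G.induce (A : Set V)).edgeSet.ncard + (G.induce (B : Set V)).edgeSet.ncard := by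
  simp only [ncard_edgeSet_induce]
  rw [← card_union_of_disjoint]
  · congr 1
    ext e
    induction e with
    | _ x y =>
      simp only [mem_inter, mem_edgeFinset, mem_edgeSet, mem_union, mk_mem_sym2_iff]
      constructor
      · rintro ⟨hxy, hx | hx, hy | hy⟩
        · exact Or.inl ⟨hxy, hx, hy⟩
        · exact absurd hxy (hcross x hx y hy)
        · exact absurd hxy.symm (hcross y hy x hx)
        · exact Or.inr ⟨hxy, hx, hy⟩
      · rintro (⟨hxy, hx, hy⟩ | ⟨hxy, hx, hy⟩) <;> simp [*]
  · rw [Finset.disjoint_left]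
    intro e heA heB
    rw [mem_inter] at heA heB
    induction e with
    | _ x y =>
      exact Finset.disjoint_left.mp hAB (mk_mem_sym2_iff.mp heA.2).1 (mk_mem_sym2_iff.mp heB.2).1

lemma Subgraph.subDensity_le_indDensity [Fintype V] [DecidableEq V] [DecidableRel G.Adj]
    (H : G.Subgraph) {S : Finset V} (hS : H.verts = S) : subDensity H ≤ indDensity G S := by
  rw [subDensity, indDensity, hS, Set.ncard_coe_finset, ncard_edgeSet_induce]
  gcongr
  rw [← Set.ncard_coe_finset]
  refine Set.ncard_le_ncard (fun e he => ?_)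
  rw [coe_inter, coe_edgeFinset, coe_sym2, Set.mem_inter_iff, Set.mem_sym2_iff_subset, ← hS]
  exact ⟨H.edgeSet_subset he, fun v hv => H.mem_verts_of_mem_edge he hv⟩

theorem exists_connected_subset_indDensity_le [Fintype V] [DecidableEq V] [DecidableRel G.Adj]
    (S : Finset V) (hS : S.Nonempty) :
    ∃ C ⊆ S, C.Nonempty ∧ (G.induce (C : Set V)).Connected ∧
      indDensity G S ≤ indDensity G C := by
  induction S using Finset.strongInduction with
  | H S ih =>
  by_cases hconn : (G.induce (S : Set V)).Connected
  · exact ⟨S, subset_rfl, hS, hconn, le_rfl⟩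
  obtain ⟨A, B, hAB, rfl, hA, hB, hcross⟩ :=
    G.exists_partition_of_not_connected_induce hS hconn
  have hsplit :
      indDensity G (A ∪ B) ≤ indDensity G A ∨ indDensity G (A ∪ B) ≤ indDensity G B := by
    simp only [indDensity, G.ncard_edgeSet_induce_union hAB hcross, card_union_of_disjoint hAB]
    push_cast
    rw [mul_add]
    exact add_div_add_le_div_or_le_div (by exact_mod_cast hA.card_pos)
      (by exact_mod_cast hB.card_pos)
  rcases hsplit with hAdense | hBdense
  · obtain ⟨C, hCA, hC, hCconn, hCdense⟩ :=
      ih A (left_lt_sup.2 fun hBA => hB.ne_empty (disjoint_self.1 (hAB.mono_left hBA))) hA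
    exact ⟨C, hCA.trans subset_union_left, hC, hCconn, hAdense.trans hCdense⟩
  · obtain ⟨C, hCB, hC, hCconn, hCdense⟩ :=
      ih B (right_lt_sup.2 fun hAB' => hA.ne_empty (disjoint_self.1 (hAB.mono_right hAB'))) hB
    exact ⟨C, hCB.trans subset_union_right, hC, hCconn, hBdense.trans hCdense⟩

lemma sq_le_two_mul_ncard_edgeSet_induce [DecidableRel G.Adj] {S : Finset V}
    (hS : S.Nonempty) {d : ℝ} (hd : 0 ≤ d) (hdense : d ≤ indDensity G S) :
    d ^ 2 ≤ 2 * (G.induce (S : Set V)).edgeSet.ncard := by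
  have hpos : (0 : ℝ) < #S := by exact_mod_cast hS.card_pos
  rw [indDensity, le_div_iff₀ hpos] at hdense
  have hchoose : (2 * (G.induce (S : Set V)).edgeSet.ncard : ℝ) ≤ #S * (#S - 1) := by
    have := (G.induce (S : Set V)).card_edgeFinset_le_card_choose_two
    rw [← Nat.cast_le (α := ℝ), Nat.cast_choose_two] at this
    rw [← coe_edgeFinset, Set.ncard_coe_finset]
    simp only [coe_sort_coe, Fintype.card_coe] at this
    linarith
  have : d ≤ #S - 1 := le_of_mul_le_mul_left (by nlinarith) hpos
  nlinarith

end SimpleGraph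

theorem stmt11_general [Fintype V] (G : SimpleGraph V) [DecidableRel G.Adj]
    (hG : G.Connected) (k : ℕ) (hk4 : 4 ≤ k)
    (hkn : 3 * k ≤ 2 * Fintype.card V)
    (Vh : Finset V)
    (d : ℝ) (hd : 0 ≤ d)
    (hsub : ∃ H : G.Subgraph, H.verts ⊆ (↑Vh : Set V)ᶜ ∧ H.verts.ncard = k ∧
      subDensity H ≥ d) :
    ∃ S : Finset V, S.card = k ∧ (G.induce (S : Set V)).Connected ∧
      indDensity G S ≥ d ^ 2 * ((k : ℝ) - 2) /
        (2 * (k : ℝ) * max (k : ℝ) (2 * ((2 / (k : ℝ)) * ∑ v ∈ Vh, (G.degree v : ℝ)))) := by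
  classical
  obtain ⟨H, -, hHk, hHd⟩ := hsub
  set S₀ := H.verts.toFinset
  have hS₀k : #S₀ = k := by rw [← hHk, Set.ncard_eq_toFinset_card']
  have hS₀ : S₀.Nonempty := card_pos.1 (by omega)
  obtain ⟨C, hCS₀, hC, hCconn, hCdense⟩ := G.exists_connected_subset_indDensity_le S₀ hS₀
  have hdC : d ≤ indDensity G C :=
    hHd.trans ((H.subDensity_le_indDensity G (Set.coe_toFinset _).symm).trans hCdense)
  obtain ⟨S, hCS, hSk, hSconn⟩ := G.exists_connected_superset_card hG.preconnected hC hCconn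
    ((card_le_card hCS₀).trans hS₀k.le) (by omega)
  refine ⟨S, hSk, hSconn, ?_⟩
  have hsq : d ^ 2 ≤ 2 * (G.induce (S : Set V)).edgeSet.ncard :=
    (G.sq_le_two_mul_ncard_edgeSet_induce hC hd hdC).trans
      (by exact_mod_cast Nat.mul_le_mul_left 2 (G.ncard_edgeSet_induce_mono hCS))
  have hk : (4 : ℝ) ≤ k := by exact_mod_cast hk4
  have hkM := le_max_left (k : ℝ) (2 * ((2 / (k : ℝ)) * ∑ v ∈ Vh, (G.degree v : ℝ)))
  generalize max (k : ℝ) _ = M at hkM ⊢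
  calc d ^ 2 * ((k : ℝ) - 2) / (2 * k * M) ≤ d ^ 2 / k := by
        rw [div_le_div_iff₀ (by nlinarith) (by linarith)]
        nlinarith [mul_nonneg (mul_nonneg (sq_nonneg d) (by linarith : (0 : ℝ) ≤ k))
          (by linarith : 0 ≤ 2 * M - (k - 2))]
    _ ≤ 2 * ((G.induce (S : Set V)).edgeSet.ncard : ℝ) / k := by gcongr
    _ = indDensity G S := by rw [indDensity, hSk]

/-- if `G[V∖V_h]` contains a `k`-subgraph of average degree at least `d`,
then `G` has a connected `k`-subgraph of density at least `d²(k-2)/(2k·max{k,2d_h})`. -/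
theorem stmt11 [Fintype V] [DecidableEq V] (G : SimpleGraph V) [DecidableRel G.Adj]
    (hG : G.Connected) (k : ℕ) (hke : Even k) (hk4 : 4 ≤ k)
    (hkn : 3 * k ≤ 2 * Fintype.card V)
    (Vh : Finset V) (hVh : Vh.card = k / 2)
    (hhigh : ∀ u ∉ Vh, ∀ v ∈ Vh, G.degree u ≤ G.degree v)
    (d : ℝ) (hd : 0 ≤ d)
    (hsub : ∃ H : G.Subgraph, H.verts ⊆ (↑Vh : Set V)ᶜ ∧ H.verts.ncard = k ∧
      subDensity H ≥ d) :
    ∃ S : Finset V, S.card = k ∧ (G.induce (S : Set V)).Connected ∧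
      indDensity G S ≥ d ^ 2 * ((k : ℝ) - 2) /
        (2 * (k : ℝ) * max (k : ℝ) (2 * ((2 / (k : ℝ)) * ∑ v ∈ Vh, (G.degree v : ℝ)))) :=
  stmt11_general G hG k hk4 hkn Vh d hd hsub
end

section
/- There exists a constant c > 0 such that for every connected finite simple graph G on n vertices with nonnegative integer edge weights w and every integer k with 3 ≤ k ≤ n, there exists a set S of exactly k vertices of G such that G[S] is connected and σ*_{k,w}(G) ≤ c · min{ n^{2/3}, n²/k², k } · σ_w(G[S]). -/
open Finset

variable {V : Type*}

/-!
Write `W(S)` for the total weight of `G[S]`. Two connected sets of at most `k` vertices carry a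
large share of weight. First, let `M` be a heaviest `k`-set: every edge of `G[M]` lies in the star
inside `M` of one of its endpoints, so one of these `k` connected stars has weight at least
`W(M) / k`. Second, cut a walk of length at most `2n` through all vertices into `O(n / k)`
segments of at most `k / 4 + 1` vertices each: every edge joins two segments whose union is
connected with at most `k` vertices, so one of these `O(n² / k²)` unions has weight at least a
`Ω(k² / n²)` fraction of `W(V)`. Either set grows, inside the connected graph `G`, to a connected
`k`-set without losing weight. The third bound is free: `min(k, n²/k²)³ ≤ k² · n²/k² = n²`.
-/

namespace SimpleGraph

open scoped Classical

variable {G : SimpleGraph V}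

lemma connected_induce_insert {s : Set V} {a b : V} (hs : (G.induce s).Connected) (ha : a ∈ s)
    (hab : G.Adj a b) : (G.induce (insert b s)).Connected := by
  have h := induce_union_connected (induce_pair_connected_of_adj hab).preconnected hs.preconnected
    ⟨a, by simp, ha⟩
  rwa [Set.insert_union, Set.singleton_union,
    Set.insert_eq_of_mem (Set.mem_insert_of_mem b ha)] at h

lemma connected_induce_star (v : V) (N : Finset V) (hN : ∀ u ∈ N, G.Adj v u) :
    (G.induce (insert v N : Finset V)).Connected := by
  induction N using Finset.induction_on with
  | empty =>
    rw [insert_empty, coe_singleton, induce_singleton_eq_top]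
    exact connected_top
  | insert u N _ ih =>
    rw [Finset.insert_comm, coe_insert]
    exact connected_induce_insert (ih fun x hx => hN x (mem_insert_of_mem hx)) (by simp)
      (hN u (mem_insert_self u N))

lemma Connected.exists_connected_induce_superset_card_eq [Fintype V] (hG : G.Connected)
    {S : Finset V} (hS : (G.induce (S : Set V)).Connected) {k : ℕ} (hSk : #S ≤ k)
    (hk : k ≤ Fintype.card V) : ∃ T, S ⊆ T ∧ #T = k ∧ (G.induce (T : Set V)).Connected := by
  induction k, hSk using Nat.le_induction with
  | base => exact ⟨S, subset_rfl, rfl, hS⟩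
  | succ m _ ih =>
    obtain ⟨T, hST, hT, hTconn⟩ := ih (by omega)
    obtain ⟨z, -, hz⟩ := exists_mem_notMem_of_card_lt_card (s := T) (t := univ)
      (by rw [card_univ]; omega)
    obtain ⟨⟨a, ha⟩⟩ := hTconn.nonempty
    obtain ⟨d, -, hd₁, hd₂⟩ := (hG.preconnected a z).some.exists_boundary_dart (T : Set V) ha hz
    refine ⟨insert d.snd T, hST.trans (subset_insert _ _),
      by rw [card_insert_of_notMem hd₂, hT], ?_⟩
    rw [coe_insert]
    exact connected_induce_insert hTconn hd₁ d.adj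

lemma Walk.exists_length_eq_add_two_support_insert {u v a b : V} (p : G.Walk u v)
    (ha : a ∈ p.support) (hab : G.Adj a b) : ∃ q : G.Walk u v,
      q.length = p.length + 2 ∧ insert b p.support.toFinset ⊆ q.support.toFinset := by
  have hp := p.take_spec ha
  refine ⟨(p.takeUntil a ha).append (cons hab (cons hab.symm (p.dropUntil a ha))), ?_, ?_⟩
  · have := congrArg length hp
    simp only [length_append, length_cons] at this ⊢
    omega
  · intro x hx
    have hx' : x = b ∨ x ∈ ((p.takeUntil a ha).append (p.dropUntil a ha)).support := by
      rw [hp]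
      simpa using hx
    simp only [List.mem_toFinset, mem_support_append_iff, support_cons, List.mem_cons] at hx' ⊢
    tauto

lemma Connected.exists_walk_length_le_forall_mem_support [Fintype V] (hG : G.Connected) :
    ∃ (u v : V) (p : G.Walk u v), p.length ≤ 2 * Fintype.card V ∧ ∀ x, x ∈ p.support := by
  have key : ∀ d, ∃ (u v : V) (p : G.Walk u v),
      p.length ≤ 2 * d ∧ min (d + 1) (Fintype.card V) ≤ #p.support.toFinset := by
    intro d
    induction d with
    | zero =>
      obtain ⟨u⟩ := hG.nonempty
      exact ⟨u, u, Walk.nil, by simp, by simp⟩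
    | succ d ih =>
      obtain ⟨u, v, p, hlen, hcard⟩ := ih
      by_cases hall : p.support.toFinset = univ
      · exact ⟨u, v, p, by omega, by rw [hall, card_univ]; omega⟩
      obtain ⟨z, -, hz⟩ := exists_of_ssubset (ssubset_univ_iff.mpr hall)
      obtain ⟨d', -, hd₁, hd₂⟩ := (hG.preconnected u z).some.exists_boundary_dart
        (p.support.toFinset : Set V) (by simp) hz
      obtain ⟨q, hq, hsub⟩ :=
        p.exists_length_eq_add_two_support_insert (by simpa using hd₁) d'.adj
      refine ⟨u, v, q, by omega, ?_⟩
      have := card_le_card hsub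
      rw [card_insert_of_notMem hd₂] at this
      omega
  obtain ⟨u, v, p, hlen, hcard⟩ := key (Fintype.card V)
  have hall : p.support.toFinset = univ :=
    eq_univ_of_card _ (le_antisymm (card_le_univ _) (by omega))
  exact ⟨u, v, p, hlen, fun x => List.mem_toFinset.mp (hall ▸ mem_univ x)⟩

lemma Walk.exists_cover_support_connected_card_le {u v : V} (p : G.Walk u v) {h : ℕ}
    (hh : 0 < h) :
    ∃ 𝓑 : Finset (Finset V), (∀ B ∈ 𝓑, #B ≤ h + 1 ∧ (G.induce (B : Set V)).Connected) ∧
      (∀ x ∈ p.support, ∃ B ∈ 𝓑, x ∈ B) ∧ #𝓑 * h ≤ p.length + h := by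
  let segment : ℕ → Finset V := fun i => ((p.drop (i * h)).take h).support.toFinset
  refine ⟨(range (p.length / h + 1)).image segment, ?_, ?_, ?_⟩
  · simp only [mem_image, forall_exists_index, and_imp, forall_apply_eq_imp_iff₂]
    intro i _
    refine ⟨(List.toFinset_card_le _).trans ?_, ?_⟩
    · rw [length_support, take_length]
      omega
    · rw [List.coe_toFinset]
      exact Walk.connected_induce_support _
  · intro x hx
    obtain ⟨j, rfl, hj⟩ := mem_support_iff_exists_getVert.mp hx
    refine ⟨segment (j / h), mem_image_of_mem _ (mem_range.mpr ?_), ?_⟩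
    · have := Nat.div_le_div_right hj (c := h)
      omega
    · have : ((p.drop (j / h * h)).take h).getVert (j % h) = p.getVert j := by
        rw [take_getVert, drop_getVert, min_eq_right (Nat.mod_lt j hh).le, Nat.div_add_mod']
      simp only [segment, List.mem_toFinset, ← this]
      exact getVert_mem_support _ _
  · calc #((range (p.length / h + 1)).image segment) * h ≤ (p.length / h + 1) * h :=
          Nat.mul_le_mul_right _ (card_image_le.trans (card_range _).le)
      _ ≤ p.length + h := by
          rw [add_mul, one_mul]
          exact Nat.add_le_add_right (Nat.div_mul_le_self _ _) _

lemma Connected.exists_cover_connected_card_le [Fintype V] (hG : G.Connected) {h : ℕ}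
    (hh : 0 < h) :
    ∃ 𝓑 : Finset (Finset V), (∀ B ∈ 𝓑, #B ≤ h + 1 ∧ (G.induce (B : Set V)).Connected) ∧
      (∀ x, ∃ B ∈ 𝓑, x ∈ B) ∧ #𝓑 * h ≤ 2 * Fintype.card V + h := by
  obtain ⟨u, v, p, hlen, hsupp⟩ := hG.exists_walk_length_le_forall_mem_support
  obtain ⟨𝓑, h𝓑, hcov, hcard⟩ := p.exists_cover_support_connected_card_le hh
  exact ⟨𝓑, h𝓑, fun x => hcov x (hsupp x), by omega⟩

noncomputable def inducedWeight (G : SimpleGraph V) (w : Sym2 V → ℝ) (S : Finset V) : ℝ :=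
  ∑ e ∈ S.sym2 with e ∈ G.edgeSet, w e

section Weight

variable {w : Sym2 V → ℝ} (hw : ∀ e, 0 ≤ w e)
include hw

lemma inducedWeight_nonneg (S : Finset V) : 0 ≤ G.inducedWeight w S :=
  sum_nonneg fun e _ => hw e

lemma inducedWeight_mono {S T : Finset V} (h : S ⊆ T) :
    G.inducedWeight w S ≤ G.inducedWeight w T :=
  sum_le_sum_of_subset_of_nonneg (filter_subset_filter _ (sym2_mono h)) fun e _ _ => hw e

lemma inducedWeight_le_sum_of_forall_edge {A : Finset V} (𝓕 : Finset (Finset V))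
    (hcov : ∀ e ∈ G.edgeSet, e ∈ A.sym2 → ∃ F ∈ 𝓕, e ∈ F.sym2) :
    G.inducedWeight w A ≤ ∑ F ∈ 𝓕, G.inducedWeight w F := by
  calc G.inducedWeight w A
      ≤ ∑ e ∈ A.sym2 with e ∈ G.edgeSet, ∑ F ∈ 𝓕, if e ∈ F.sym2 then w e else 0 := by
        refine sum_le_sum fun e he => ?_
        obtain ⟨he, hG⟩ := mem_filter.mp he
        obtain ⟨F, hF, heF⟩ := hcov e hG he
        simpa [heF] using single_le_sum (f := fun F => if e ∈ F.sym2 then w e else 0)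
          (fun F _ => by split_ifs <;> simp [hw]) hF
    _ = ∑ F ∈ 𝓕, ∑ e ∈ A.sym2 with e ∈ G.edgeSet ∧ e ∈ F.sym2, w e := by
        rw [sum_comm]
        simp_rw [← sum_filter, filter_filter]
    _ ≤ ∑ F ∈ 𝓕, G.inducedWeight w F := by
        refine sum_le_sum fun F _ => sum_le_sum_of_subset_of_nonneg ?_ fun e _ _ => hw e
        intro e he
        simp only [mem_filter] at he ⊢
        exact ⟨he.2.2, he.2.1⟩

lemma exists_mem_inducedWeight_le_card_mul {A : Finset V} {𝓕 : Finset (Finset V)}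
    (h𝓕 : 𝓕.Nonempty) (hcov : ∀ e ∈ G.edgeSet, e ∈ A.sym2 → ∃ F ∈ 𝓕, e ∈ F.sym2) :
    ∃ F ∈ 𝓕, G.inducedWeight w A ≤ #𝓕 * G.inducedWeight w F := by
  obtain ⟨F, hF, hmax⟩ := exists_max_image 𝓕 (G.inducedWeight w) h𝓕
  refine ⟨F, hF, ?_⟩
  calc G.inducedWeight w A ≤ ∑ F ∈ 𝓕, G.inducedWeight w F :=
        inducedWeight_le_sum_of_forall_edge hw 𝓕 hcov
    _ ≤ #𝓕 • G.inducedWeight w F := sum_le_card_nsmul _ _ _ hmax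
    _ = #𝓕 * G.inducedWeight w F := nsmul_eq_mul _ _

lemma finsum_mem_edgeSet_le_inducedWeight (H : G.Subgraph) {A : Finset V} (hA : H.verts ⊆ A) :
    ∑ᶠ e ∈ H.edgeSet, w e ≤ G.inducedWeight w A := by
  have hE : H.edgeSet = ↑({e ∈ A.sym2 | e ∈ H.edgeSet}) := by
    ext e
    induction e using Sym2.ind with
    | _ a b =>
      simp only [coe_filter, mk_mem_sym2_iff, Set.mem_ofPred_eq, Subgraph.mem_edgeSet]
      exact ⟨fun h => ⟨⟨hA (H.edge_vert h), hA (H.edge_vert h.symm)⟩, h⟩, fun h => h.2⟩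
  rw [hE, finsum_mem_coe_finset]
  refine sum_le_sum_of_subset_of_nonneg (fun e he => ?_) fun e _ _ => hw e
  obtain ⟨heA, heH⟩ := mem_filter.mp he
  exact mem_filter.mpr ⟨heA, H.edgeSet_subset heH⟩

variable [Fintype V]

lemma Connected.exists_connected_card_eq_inducedWeight_le_card_mul (hG : G.Connected) {k : ℕ}
    (hk : 0 < k) (hkn : k ≤ Fintype.card V) :
    ∃ S : Finset V, #S = k ∧ (G.induce (S : Set V)).Connected ∧
      ∀ A : Finset V, #A = k → G.inducedWeight w A ≤ k * G.inducedWeight w S := by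
  obtain ⟨M, hM, hmax⟩ := exists_max_image (powersetCard k univ) (G.inducedWeight w)
    (powersetCard_nonempty.mpr (by simpa using hkn))
  obtain ⟨-, hMk⟩ := mem_powersetCard.mp hM
  let star : V → Finset V := fun v => insert v (M.filter (G.Adj v))
  have hcover : ∀ e ∈ G.edgeSet, e ∈ M.sym2 → ∃ F ∈ M.image star, e ∈ F.sym2 := by
    intro e he heM
    induction e using Sym2.ind with
    | _ a b =>
      obtain ⟨ha, hb⟩ := mk_mem_sym2_iff.mp heM
      refine ⟨star a, mem_image_of_mem _ ha, mk_mem_sym2_iff.mpr ⟨mem_insert_self _ _, ?_⟩⟩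
      exact mem_insert_of_mem (mem_filter.mpr ⟨hb, he⟩)
  obtain ⟨F, hF, hMF⟩ := exists_mem_inducedWeight_le_card_mul hw
    ((card_pos.mp (hMk ▸ hk)).image star) hcover
  obtain ⟨v, hv, rfl⟩ := mem_image.mp hF
  have hstar : star v ⊆ M := insert_subset hv (filter_subset _ _)
  obtain ⟨S, hvS, hS, hSconn⟩ := hG.exists_connected_induce_superset_card_eq
    (connected_induce_star v _ fun u hu => (mem_filter.mp hu).2)
    ((card_le_card hstar).trans hMk.le) hkn
  refine ⟨S, hS, hSconn, fun A hA => ?_⟩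
  have hcard : (#(M.image star) : ℝ) ≤ k := by exact_mod_cast hMk ▸ card_image_le
  calc G.inducedWeight w A ≤ G.inducedWeight w M :=
        hmax A (mem_powersetCard.mpr ⟨subset_univ _, hA⟩)
    _ ≤ #(M.image star) * G.inducedWeight w (star v) := hMF
    _ ≤ k * G.inducedWeight w S :=
        mul_le_mul hcard (inducedWeight_mono hw hvS) (inducedWeight_nonneg hw _) (by positivity)

lemma Connected.exists_connected_card_eq_sq_mul_inducedWeight_univ_le (hG : G.Connected) {k : ℕ}
    (hk : 4 ≤ k) (hkn : k ≤ Fintype.card V) :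
    ∃ S : Finset V, #S = k ∧ (G.induce (S : Set V)).Connected ∧
      (k : ℝ) ^ 2 * G.inducedWeight w univ ≤
        (21 * Fintype.card V : ℝ) ^ 2 * G.inducedWeight w S := by
  obtain ⟨𝓑, h𝓑, hcov, h𝓑card⟩ := hG.exists_cover_connected_card_le (h := k / 4) (by omega)
  let 𝓕 : Finset (Finset V) := ((𝓑 ×ˢ 𝓑).image fun BC => BC.1 ∪ BC.2).filter
    fun F => (G.induce (F : Set V)).Connected
  have h𝓕 : ∀ F ∈ 𝓕, #F ≤ k ∧ (G.induce (F : Set V)).Connected := by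
    intro F hF
    simp only [𝓕, mem_filter, mem_image, mem_product, Prod.exists] at hF
    obtain ⟨⟨B, C, ⟨hB, hC⟩, rfl⟩, hconn⟩ := hF
    have := (h𝓑 B hB).1
    have := (h𝓑 C hC).1
    exact ⟨(card_union_le _ _).trans (by omega), hconn⟩
  have hmem : ∀ B ∈ 𝓑, ∀ C ∈ 𝓑, (G.induce (B ∪ C : Set V)).Connected → B ∪ C ∈ 𝓕 :=
    fun B hB C hC hconn => mem_filter.mpr
      ⟨mem_image.mpr ⟨(B, C), mem_product.mpr ⟨hB, hC⟩, rfl⟩, by rwa [coe_union]⟩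
  have hcover : ∀ e ∈ G.edgeSet, e ∈ univ.sym2 → ∃ F ∈ 𝓕, e ∈ F.sym2 := by
    intro e he _
    induction e using Sym2.ind with
    | _ a b =>
      obtain ⟨B, hB, haB⟩ := hcov a
      obtain ⟨C, hC, hbC⟩ := hcov b
      refine ⟨B ∪ C, hmem B hB C hC ?_,
        mk_mem_sym2_iff.mpr ⟨mem_union_left _ haB, mem_union_right _ hbC⟩⟩
      exact connected_induce_union (h𝓑 B hB).2.preconnected (h𝓑 C hC).2.preconnected haB hbC he
  have h𝓕ne : 𝓕.Nonempty := by
    obtain ⟨v⟩ := hG.nonempty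
    obtain ⟨B, hB, -⟩ := hcov v
    exact ⟨B ∪ B, hmem B hB B hB (by rw [Set.union_self]; exact (h𝓑 B hB).2)⟩
  obtain ⟨F, hF, hWF⟩ := exists_mem_inducedWeight_le_card_mul hw h𝓕ne hcover
  obtain ⟨S, hFS, hS, hSconn⟩ :=
    hG.exists_connected_induce_superset_card_eq (h𝓕 F hF).2 (h𝓕 F hF).1 hkn
  refine ⟨S, hS, hSconn, ?_⟩
  have h𝓕card : #𝓕 ≤ #𝓑 ^ 2 :=
    (card_filter_le _ _).trans (card_image_le.trans (by rw [card_product, sq]))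
  have h𝓑k : #𝓑 * k ≤ 21 * Fintype.card V :=
    calc #𝓑 * k ≤ #𝓑 * (7 * (k / 4)) := Nat.mul_le_mul_left _ (by omega)
      _ = 7 * (#𝓑 * (k / 4)) := by ring
      _ ≤ 21 * Fintype.card V := by linarith [Nat.div_le_self k 4]
  have hWS := inducedWeight_nonneg hw (G := G) S
  calc (k : ℝ) ^ 2 * G.inducedWeight w univ ≤ k ^ 2 * (#𝓑 ^ 2 * G.inducedWeight w S) := by
        gcongr
        calc G.inducedWeight w univ ≤ #𝓕 * G.inducedWeight w F := hWF
          _ ≤ #𝓑 ^ 2 * G.inducedWeight w S :=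
            mul_le_mul (by exact_mod_cast h𝓕card) (inducedWeight_mono hw hFS)
              (inducedWeight_nonneg hw _) (by positivity)
    _ = (#𝓑 * k : ℝ) ^ 2 * G.inducedWeight w S := by ring
    _ ≤ (21 * Fintype.card V : ℝ) ^ 2 * G.inducedWeight w S :=
        mul_le_mul_of_nonneg_right (pow_le_pow_left₀ (by positivity) (by exact_mod_cast h𝓑k) 2) hWS

lemma Connected.exists_connected_card_eq_inducedWeight_le_min (hG : G.Connected) {k : ℕ}
    (hk : 3 ≤ k) (hkn : k ≤ Fintype.card V) :
    ∃ S : Finset V, #S = k ∧ (G.induce (S : Set V)).Connected ∧ ∀ A : Finset V, #A = k →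
      G.inducedWeight w A ≤
        441 * min (k : ℝ) ((Fintype.card V : ℝ) ^ 2 / (k : ℝ) ^ 2) * G.inducedWeight w S := by
  have hk₀ : (0 : ℝ) < k := by positivity
  have hkn' : (k : ℝ) ≤ Fintype.card V := by exact_mod_cast hkn
  have hratio : 1 ≤ (Fintype.card V : ℝ) ^ 2 / (k : ℝ) ^ 2 := by
    rw [one_le_div (by positivity)]
    gcongr
  by_cases hsmall : k < 4 ∨ (k : ℝ) ≤ (Fintype.card V : ℝ) ^ 2 / (k : ℝ) ^ 2
  · obtain ⟨S, hS, hSconn, hle⟩ :=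
      hG.exists_connected_card_eq_inducedWeight_le_card_mul hw (by omega) hkn
    refine ⟨S, hS, hSconn, fun A hA => (hle A hA).trans
      (mul_le_mul_of_nonneg_right ?_ (inducedWeight_nonneg hw S))⟩
    rcases hsmall with hk4 | hk4
    · have : (k : ℝ) ≤ 3 := by exact_mod_cast (by omega : k ≤ 3)
      have : 1 ≤ min (k : ℝ) ((Fintype.card V : ℝ) ^ 2 / (k : ℝ) ^ 2) :=
        le_min (by exact_mod_cast (by omega : 1 ≤ k)) hratio
      linarith
    · rw [min_eq_left hk4]
      linarith
  · push Not at hsmall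
    obtain ⟨hk4, hlt⟩ := hsmall
    obtain ⟨S, hS, hSconn, hle⟩ :=
      hG.exists_connected_card_eq_sq_mul_inducedWeight_univ_le hw hk4 hkn
    refine ⟨S, hS, hSconn, fun A _ => (inducedWeight_mono hw (subset_univ A)).trans ?_⟩
    rw [min_eq_right hlt.le, show (441 : ℝ) * ((Fintype.card V : ℝ) ^ 2 / (k : ℝ) ^ 2) *
      G.inducedWeight w S = (21 * Fintype.card V : ℝ) ^ 2 * G.inducedWeight w S / (k : ℝ) ^ 2 by
        ring, le_div_iff₀ (by positivity)]
    linarith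

end Weight

end SimpleGraph

open SimpleGraph

lemma indWDensity_eq_inducedWeight (G : SimpleGraph V) (w : Sym2 V → ℝ) (S : Finset V) :
    indWDensity G w S = 2 * G.inducedWeight w S / #S := by
  classical
  have hE : {e : Sym2 V | e ∈ G.edgeSet ∧ ∀ v ∈ e, v ∈ S} = ↑({e ∈ S.sym2 | e ∈ G.edgeSet}) := by
    ext e
    simp [mem_sym2_iff, and_comm]
  rw [indWDensity, hE, finsum_mem_coe_finset, inducedWeight]

lemma maxKWDensity_le_of_forall_card_eq [Fintype V] {G : SimpleGraph V} {w : Sym2 V → ℝ}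
    (hw : ∀ e, 0 ≤ w e) {k : ℕ} {b : ℝ} (hb : 0 ≤ b)
    (h : ∀ A : Finset V, #A = k → 2 * G.inducedWeight w A / k ≤ b) : maxKWDensity G w k ≤ b := by
  classical
  refine Real.sSup_le ?_ hb
  rintro x ⟨H, hHk, rfl⟩
  have hA : #H.verts.toFinset = k := by rw [← Set.ncard_eq_toFinset_card', hHk]
  calc subWDensity w H = 2 * (∑ᶠ e ∈ H.edgeSet, w e) / k := by rw [subWDensity, hHk]
    _ ≤ 2 * G.inducedWeight w H.verts.toFinset / k := by
        gcongr
        exact finsum_mem_edgeSet_le_inducedWeight hw H (by simp)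
    _ ≤ b := h _ hA

lemma min_le_rpow_two_div_three {x y : ℝ} (hx : 0 ≤ x) (hy : 0 ≤ y) :
    min x (y ^ 2 / x ^ 2) ≤ y ^ ((2 : ℝ) / 3) := by
  set m := min x (y ^ 2 / x ^ 2)
  have hcube : (y ^ ((2 : ℝ) / 3)) ^ 3 = y ^ 2 := by
    rw [← Real.rpow_natCast, ← Real.rpow_mul hy]
    norm_num
  refine le_of_pow_le_pow_left₀ three_ne_zero (by positivity) ?_
  rw [hcube]
  rcases hx.eq_or_lt with rfl | hx
  · simp [m, sq_nonneg]
  · calc m ^ 3 = m * m * m := by ring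
      _ ≤ x * x * (y ^ 2 / x ^ 2) := by gcongr <;> simp [m]
      _ = y ^ 2 := by field_simp

/-- an `O(min{n^{2/3}, n²/k², k})`-approximation for the heaviest
connected `k`-subgraph problem with nonnegative integer weights. -/
theorem stmt17 : ∃ c : ℝ, c > 0 ∧
    ∀ (V : Type) [Fintype V] (G : SimpleGraph V), G.Connected →
      ∀ w : Sym2 V → ℕ, ∀ k : ℕ, 3 ≤ k → k ≤ Fintype.card V →
        ∃ S : Finset V, S.card = k ∧ (G.induce (S : Set V)).Connected ∧
          maxKWDensity G (fun e => (w e : ℝ)) k ≤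
            c * min ((Fintype.card V : ℝ) ^ ((2 : ℝ) / 3))
                (min ((Fintype.card V : ℝ) ^ 2 / (k : ℝ) ^ 2) (k : ℝ)) *
              indWDensity G (fun e => (w e : ℝ)) S := by
  refine ⟨441, by norm_num, fun V _ G hG w k hk hkn => ?_⟩
  have hw : ∀ e, (0 : ℝ) ≤ w e := fun e => Nat.cast_nonneg _
  set n : ℝ := (Fintype.card V : ℝ)
  obtain ⟨S, hS, hSconn, hle⟩ := hG.exists_connected_card_eq_inducedWeight_le_min hw hk hkn
  have hWS := inducedWeight_nonneg hw (G := G) S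
  have hmin : min (k : ℝ) (n ^ 2 / (k : ℝ) ^ 2) ≤
      min (n ^ ((2 : ℝ) / 3)) (min (n ^ 2 / (k : ℝ) ^ 2) k) :=
    le_min (min_le_rpow_two_div_three k.cast_nonneg (Fintype.card V).cast_nonneg) (min_comm _ _).le
  refine ⟨S, hS, hSconn, ?_⟩
  rw [indWDensity_eq_inducedWeight, hS]
  refine maxKWDensity_le_of_forall_card_eq hw
    (mul_nonneg (by positivity) (div_nonneg (by linarith) k.cast_nonneg)) fun A hA => ?_
  calc 2 * G.inducedWeight _ A / k
      ≤ 2 * (441 * min (k : ℝ) (n ^ 2 / (k : ℝ) ^ 2) * G.inducedWeight _ S) / k := by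
        gcongr
        exact hle A hA
    _ ≤ 2 * (441 * min (n ^ ((2 : ℝ) / 3)) (min (n ^ 2 / (k : ℝ) ^ 2) k) *
        G.inducedWeight _ S) / k := by
        gcongr
    _ = _ := by ring
end
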